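/- arXiv:1705.06406 — 6 statements merged into one kernel-verified Lean document; each statement's English description precedes it below -/
import Mathlib

section
/- Let V be a real vector space, let φ : V → ℝ be a sublinear function, let (Aₙ) be a decreasing sequence of nonempty convex subsets of V, let (βₙ) be a sequence of strictly positive reals, and let r > 0 satisfy r < inf_{a ∈ A₁} φ(a). Then there exists a sequence (aₙ) with aₙ ∈ Aₙ for all n, and φ(∑_{i=1}^{n} βᵢaᵢ) + β_{n+1} r < φ(∑_{i=1}^{n+1} βᵢaᵢ) for all n. -/
/-!
Choose the terms greedily: `aₙ` is an `εₙ`-approximate minimiser of `c ↦ φ(sₙ₋₁ + βₙ c)` over `Aₙ`,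
where `sₙ` is the `n`-th partial sum. The convex combination of `aₙ` and `aₙ₊₁` with weights
proportional to `βₙ, βₙ₊₁` is a competitor in `Aₙ`, so approximate minimality of `aₙ` together with
sublinearity shows that `φ` gains at least `βₙ₊₁ ρₙ₊₁` from `sₙ` to `sₙ₊₁`. Here the thresholds
`ρₙ = r + (inf_{A₀} φ - r) / 2ⁿ` decrease strictly, and the tolerance `εₙ` is chosen so that the
loss `ρₙ - ρₙ₊₁` pays for it.
-/

open Finset

structure IsSublinear {V : Type*} [AddCommGroup V] [Module ℝ V] (φ : V → ℝ) : Prop where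
  map_nonneg_smul : ∀ (c : ℝ) (x : V), 0 ≤ c → φ (c • x) = c * φ x
  map_add_le : ∀ x y : V, φ (x + y) ≤ φ x + φ y

theorem exists_mem_forall_lt_add {α : Type*} {f : α → ℝ} {s : Set α} (hs : s.Nonempty)
    (hf : BddBelow (f '' s)) {ε : ℝ} (hε : 0 < ε) : ∃ a ∈ s, ∀ c ∈ s, f a < f c + ε := by
  obtain ⟨_, ⟨a, ha, rfl⟩, hlt⟩ :=
    exists_lt_of_csInf_lt (hs.image f) (lt_add_of_pos_right (sInf (f '' s)) hε)
  exact ⟨a, ha, fun c hc => hlt.trans_le (by gcongr; exact csInf_le hf (Set.mem_image_of_mem f hc))⟩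

namespace IsSublinear

variable {V : Type*} [AddCommGroup V] [Module ℝ V] {φ : V → ℝ}

theorem map_zero (hφ : IsSublinear φ) : φ 0 = 0 := by
  simpa using hφ.map_nonneg_smul 0 0 le_rfl

theorem map_smul_add_smul_le (hφ : IsSublinear φ) {u v : ℝ} (hu : 0 ≤ u) (hv : 0 ≤ v) (x y : V) :
    φ (u • x + v • y) ≤ u * φ x + v * φ y :=
  calc φ (u • x + v • y) ≤ φ (u • x) + φ (v • y) := hφ.map_add_le _ _
    _ = u * φ x + v * φ y := by rw [hφ.map_nonneg_smul u x hu, hφ.map_nonneg_smul v y hv]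

theorem bddBelow_image_add_smul (hφ : IsSublinear φ) {t m : ℝ} (ht : 0 ≤ t) {s : Set V}
    (hs : ∀ c ∈ s, m ≤ φ c) (y : V) : BddBelow ((fun c => φ (y + t • c)) '' s) := by
  refine ⟨t * m - φ (-y), ?_⟩
  rintro _ ⟨c, hc, rfl⟩
  have hsplit : φ (t • c) ≤ φ (y + t • c) + φ (-y) := by
    simpa using hφ.map_add_le (y + t • c) (-y)
  rw [hφ.map_nonneg_smul t c ht] at hsplit
  have := mul_le_mul_of_nonneg_left (hs c hc) ht
  simp only
  linarith

theorem add_mul_lt_map_add_smul (hφ : IsSublinear φ) {p x x' : V} {b b' ρ ρ' : ℝ}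
    (hb : 0 < b) (hb' : 0 < b') (hgrow : φ p + b * ρ ≤ φ (p + b • x))
    (hmin : φ (p + b • x) <
      φ (p + b • ((b / (b + b')) • x + (b' / (b + b')) • x')) + b * b' * (ρ - ρ') / (b + b')) :
    φ (p + b • x) + b' * ρ' < φ (p + b • x + b' • x') := by
  have hγ : 0 < b + b' := add_pos hb hb'
  have hcomb : p + b • ((b / (b + b')) • x + (b' / (b + b')) • x') =
      (b / (b + b')) • (p + b • x + b' • x') + (b' / (b + b')) • p := by
    match_scalars <;> field_simp
  have hconv := hφ.map_smul_add_smul_le (div_pos hb hγ).le (div_pos hb' hγ).le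
    (p + b • x + b' • x') p
  rw [← hcomb] at hconv
  have hscaled : (b + b') * φ (p + b • x) <
      b * φ (p + b • x + b' • x') + b' * φ p + b * b' * (ρ - ρ') := by
    rw [← lt_div_iff₀' hγ]
    calc φ (p + b • x) < _ := hmin
      _ ≤ _ := by rw [add_div, add_div, mul_div_right_comm b, mul_div_right_comm b']; gcongr
  have := mul_le_mul_of_nonneg_left hgrow hb'.le
  refine lt_of_mul_lt_mul_left ?_ hb.le
  linarith

theorem exists_seq_add_mul_le_partialSum (hφ : IsSublinear φ) {A : ℕ → Set V} (hmono : Antitone A)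
    (hne : ∀ n, (A n).Nonempty) (hconv : ∀ n, Convex ℝ (A n)) {β : ℕ → ℝ} (hβ : ∀ n, 0 < β n)
    {ρ : ℕ → ℝ} (hρ : StrictAnti ρ) (hρ0 : ∀ x ∈ A 0, ρ 0 ≤ φ x) :
    ∃ a : ℕ → V, (∀ n, a n ∈ A n) ∧
      ∀ n, φ (∑ i ∈ range n, β i • a i) + β n * ρ n ≤ φ (∑ i ∈ range (n + 1), β i • a i) := by
  set ε : ℕ → ℝ := fun n => β n * β (n + 1) * (ρ n - ρ (n + 1)) / (β n + β (n + 1))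
  have hε : ∀ n, 0 < ε n := fun n =>
    div_pos (mul_pos (mul_pos (hβ n) (hβ _)) (sub_pos.2 (hρ n.lt_succ_self)))
      (add_pos (hβ n) (hβ _))
  have hmin : ∀ n (y : V), ∃ x ∈ A n, ∀ c ∈ A n, φ (y + β n • x) < φ (y + β n • c) + ε n :=
    fun n y => exists_mem_forall_lt_add (hne n)
      (hφ.bddBelow_image_add_smul (hβ n).le (fun c hc => hρ0 c (hmono (Nat.zero_le n) hc)) y) (hε n)
  choose next hnext_mem hnext_min using hmin
  let S : ℕ → V := fun n => Nat.rec 0 (fun k y => y + β k • next k y) n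
  have hS : ∀ n, S n = ∑ i ∈ range n, β i • next i (S i) := by
    intro n
    induction n with
    | zero => rfl
    | succ n ih => rw [sum_range_succ, ← ih]
  have hgrow : ∀ n, φ (S n) + β n * ρ n ≤ φ (S (n + 1)) := by
    intro n
    induction n with
    | zero =>
      show φ 0 + β 0 * ρ 0 ≤ φ (0 + β 0 • next 0 0)
      rw [hφ.map_zero, zero_add, zero_add, hφ.map_nonneg_smul _ _ (hβ 0).le]
      exact mul_le_mul_of_nonneg_left (hρ0 _ (hnext_mem 0 0)) (hβ 0).le
    | succ n ih =>
      have hγ : 0 < β n + β (n + 1) := add_pos (hβ n) (hβ _)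
      have hcomb := hconv n (hnext_mem n (S n)) (hmono n.le_succ (hnext_mem (n + 1) (S (n + 1))))
        (div_pos (hβ n) hγ).le (div_pos (hβ (n + 1)) hγ).le (by field_simp)
      exact (hφ.add_mul_lt_map_add_smul (hβ n) (hβ _) ih (hnext_min n (S n) _ hcomb)).le
  refine ⟨fun n => next n (S n), fun n => hnext_mem n _, fun n => ?_⟩
  rw [← hS, ← hS]
  exact hgrow n

end IsSublinear

theorem sublinear_increasing_sequence {V : Type*} [AddCommGroup V] [Module ℝ V]
    (φ : V → ℝ)
    (hpos : ∀ (c : ℝ) (x : V), 0 ≤ c → φ (c • x) = c * φ x)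
    (hsubadd : ∀ x y : V, φ (x + y) ≤ φ x + φ y)
    (A : ℕ → Set V) (hmono : Antitone A) (hne : ∀ n, (A n).Nonempty)
    (hconv : ∀ n, Convex ℝ (A n))
    (β : ℕ → ℝ) (hβ : ∀ n, 0 < β n)
    (r : ℝ) (hr : 0 < r) (hinf : r < ⨅ a : (A 0), φ (a : V)) :
    ∃ a : ℕ → V, (∀ n, a n ∈ A n) ∧
      ∀ n, φ (∑ i ∈ Finset.range (n + 1), β i • a i) + β (n + 1) * r <
        φ (∑ i ∈ Finset.range (n + 2), β i • a i) := by
  have hbdd : BddBelow (Set.range fun a : A 0 => φ a) := by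
    by_contra h
    rw [Real.iInf_of_not_bddBelow h] at hinf
    linarith
  set δ := (⨅ a : A 0, φ a) - r
  have hδ : 0 < δ := sub_pos.2 hinf
  set ρ : ℕ → ℝ := fun n => r + δ / 2 ^ n
  have hρ : StrictAnti ρ := strictAnti_nat_of_succ_lt fun n => by
    have := half_lt_self (div_pos hδ (pow_pos two_pos n))
    simp only [ρ, pow_succ, ← div_div]
    linarith
  have hρ0 : ∀ x ∈ A 0, ρ 0 ≤ φ x := fun x hx => by
    simpa [ρ, δ] using ciInf_le hbdd ⟨x, hx⟩
  obtain ⟨a, ha, hgrow⟩ :=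
    (IsSublinear.mk hpos hsubadd).exists_seq_add_mul_le_partialSum hmono hne hconv hβ hρ hρ0
  refine ⟨a, ha, fun n => (hgrow (n + 1)).trans_lt' ?_⟩
  have : r < ρ (n + 1) := lt_add_of_pos_right r (by positivity)
  have := mul_lt_mul_of_pos_left this (hβ (n + 1))
  linarith
end

section
/- Let X be a real normed linear space, Y a finite-dimensional subspace of X*, and ε > 0. If x* ∈ X* satisfies dist(x*, Y) > ε, then there exists x in the unit sphere of X such that x*(x) > ε and y*(x) = 0 for all y* ∈ Y. -/
/-!
The functionals in `Y` have a common kernel `⊥Y`. A functional vanishing on `⊥Y` lies in `Y`,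
because `Y` is finite-dimensional. So if `g` is a Hahn–Banach extension of `x'|⊥Y`, then
`x' - g ∈ Y` and `dist(x', Y) ≤ ‖g‖ = ‖x'|⊥Y‖`. Hence `ε < ‖x'|⊥Y‖`, which yields a unit
vector `x ∈ ⊥Y` with `ε < x'(x)`.
-/

namespace Submodule

section Field

variable {𝕜 X : Type*} [Field 𝕜] [TopologicalSpace 𝕜] [IsTopologicalRing 𝕜]
  [AddCommGroup X] [TopologicalSpace X] [Module 𝕜 X]

def preannihilator (Y : Submodule 𝕜 (X →L[𝕜] 𝕜)) : Submodule 𝕜 X :=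
  (Y.map (ContinuousLinearMap.coeLM 𝕜)).dualCoannihilator

variable {Y : Submodule 𝕜 (X →L[𝕜] 𝕜)}

theorem mem_preannihilator {x : X} : x ∈ Y.preannihilator ↔ ∀ y ∈ Y, y x = 0 := by
  simp [preannihilator, mem_dualCoannihilator]

theorem mem_of_forall_preannihilator_apply_eq_zero [FiniteDimensional 𝕜 Y] {f : X →L[𝕜] 𝕜}
    (hf : ∀ x ∈ Y.preannihilator, f x = 0) : f ∈ Y := by
  have : (f : Module.Dual 𝕜 X) ∈ Y.map (ContinuousLinearMap.coeLM 𝕜) := by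
    rw [← Subspace.dualCoannihilator_dualAnnihilator_eq (W := Y.map _), mem_dualAnnihilator]
    exact hf
  obtain ⟨y, hy, hyf⟩ := this
  rwa [ContinuousLinearMap.coe_injective hyf] at hy

end Field

theorem infDist_le_norm_comp_preannihilator {𝕜 X : Type*} [RCLike 𝕜] [SeminormedAddCommGroup X]
    [NormedSpace 𝕜 X] (Y : Submodule 𝕜 (X →L[𝕜] 𝕜)) [FiniteDimensional 𝕜 Y] (f : X →L[𝕜] 𝕜) :
    Metric.infDist f (Y : Set (X →L[𝕜] 𝕜)) ≤ ‖f.comp Y.preannihilator.subtypeL‖ := by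
  obtain ⟨g, hgf, hg⟩ := exists_extension_norm_eq _ (f.comp Y.preannihilator.subtypeL)
  have hfg : f - g ∈ Y := mem_of_forall_preannihilator_apply_eq_zero fun x hx ↦ by
    simpa [sub_eq_zero] using (hgf ⟨x, hx⟩).symm
  calc Metric.infDist f Y ≤ dist f (f - g) := Metric.infDist_le_dist_of_mem hfg
    _ = ‖f.comp Y.preannihilator.subtypeL‖ := by rw [dist_eq_norm, sub_sub_cancel, hg]

end Submodule

theorem ContinuousLinearMap.exists_norm_eq_one_lt_apply {E : Type*} [NormedAddCommGroup E]
    [NormedSpace ℝ E] (f : E →L[ℝ] ℝ) {r : ℝ} (hr₀ : 0 ≤ r) (hr : r < ‖f‖) :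
    ∃ x : E, ‖x‖ = 1 ∧ r < f x := by
  obtain ⟨x, hx₁, hrx⟩ := f.exists_lt_apply_of_lt_opNorm hr
  wlog hfx : 0 ≤ f x generalizing x
  · exact this (-x) (by rwa [norm_neg]) (by rwa [map_neg, norm_neg]) (by rw [map_neg]; linarith)
  have hx₀ : 0 < ‖x‖ := norm_pos_iff.2 fun h ↦ by rw [h, map_zero, norm_zero] at hrx; linarith
  refine ⟨‖x‖⁻¹ • x, by simp [norm_smul, hx₀.ne'], ?_⟩
  calc r < f x := by rwa [Real.norm_of_nonneg hfx] at hrx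
    _ ≤ ‖x‖⁻¹ * f x := le_mul_of_one_le_left hfx (one_le_inv₀ hx₀ |>.2 hx₁.le)
    _ = f (‖x‖⁻¹ • x) := by rw [map_smul, smul_eq_mul]

theorem exists_unit_vector_of_dist_gt {X : Type*} [NormedAddCommGroup X] [NormedSpace ℝ X]
    (Y : Submodule ℝ (X →L[ℝ] ℝ)) [FiniteDimensional ℝ Y] (ε : ℝ) (hε : 0 < ε)
    (x' : X →L[ℝ] ℝ) (hdist : ε < Metric.infDist x' (Y : Set (X →L[ℝ] ℝ))) :
    ∃ x : X, ‖x‖ = 1 ∧ ε < x' x ∧ ∀ y' ∈ Y, y' x = 0 := by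
  obtain ⟨⟨x, hxY⟩, hx₁, hεx⟩ := (x'.comp Y.preannihilator.subtypeL).exists_norm_eq_one_lt_apply
    hε.le (hdist.trans_le (Y.infDist_le_norm_comp_preannihilator x'))
  exact ⟨x, hx₁, hεx, Submodule.mem_preannihilator.1 hxY⟩
end

section
/- Every uniformly convex real Banach space is reflexive. -/
/-!
Fix `F` in the bidual with `‖F‖ = 1` and filter the closed unit ball of `X` by the weak-*
neighbourhoods of `F`. By Goldstine's theorem, which reduces through Helly's lemma to Hahn–Banach
separation in a finite-dimensional space, this filter is proper. Uniform convexity makes it Cauchy: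
if `‖f‖ ≤ 1` and `F f > 1 - δ / 2`, any two points `x, y` of the ball with `f x, f y > 1 - δ / 2`
satisfy `‖x + y‖ ≥ f (x + y) > 2 - δ`, so they are `ε`-close. The limit `z` of the filter then has
`φ z = F φ` for every `φ`.
-/

open Filter Topology Metric NormedSpace

section

variable {E : Type*} [SeminormedAddCommGroup E] [NormedSpace ℝ E]

theorem ContinuousLinearMap.norm_le_of_forall_closedBall_apply_lt {g : StrongDual ℝ E} {c : ℝ}
    (hg : ∀ x ∈ closedBall (0 : E) 1, g x < c) : ‖g‖ ≤ c := by
  have hc : 0 < c := by simpa using hg 0 (mem_closedBall_self zero_le_one)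
  refine g.opNorm_le_of_unit_norm hc.le fun x hx => (abs_lt.2 ⟨?_, hg x (by simp [hx])⟩).le
  have := hg (-x) (by simp [hx])
  rw [map_neg] at this
  linarith

theorem ContinuousLinearMap.apply_comp_pi {ι : Type*} [Fintype ι] (f : ι → StrongDual ℝ E)
    (F : StrongDual ℝ (StrongDual ℝ E)) (l : StrongDual ℝ (ι → ℝ)) :
    F (l.comp (ContinuousLinearMap.pi f)) = l fun i => F (f i) := by
  classical
  have hl (v : ι → ℝ) : l v = ∑ i, v i * l (fun j => if i = j then 1 else 0) := by
    simpa using l.toLinearMap.pi_apply_eq_sum_univ v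
  have : l.comp (ContinuousLinearMap.pi f) =
      ∑ i, l (fun j => if i = j then 1 else 0) • f i := by
    ext x
    rw [ContinuousLinearMap.comp_apply, hl]
    simp [mul_comm]
  rw [this, map_sum, hl]
  simp [mul_comm]

end

theorem ContinuousLinearMap.exists_norm_le_one_lt_apply {E : Type*} [NormedAddCommGroup E]
    [NormedSpace ℝ E] {F : StrongDual ℝ E} {r : ℝ} (hr : r < ‖F‖) :
    ∃ f : E, ‖f‖ ≤ 1 ∧ r < F f := by
  obtain ⟨f, hf, hrf⟩ := F.exists_lt_apply_of_lt_opNorm hr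
  rw [Real.norm_eq_abs] at hrf
  rcases lt_abs.1 hrf with hrf | hrf
  · exact ⟨f, hf.le, hrf⟩
  · exact ⟨-f, by rw [norm_neg]; exact hf.le, by rwa [map_neg]⟩

section

variable {X : Type*} [NormedAddCommGroup X] [NormedSpace ℝ X]

theorem helly_finite {ι : Type*} [Finite ι] (f : ι → StrongDual ℝ X)
    {F : StrongDual ℝ (StrongDual ℝ X)} (hF : ‖F‖ ≤ 1) :
    (fun i => F (f i)) ∈ closure ((fun x i => f i x) '' closedBall (0 : X) 1) := by
  have := Fintype.ofFinite ι
  set T : X →L[ℝ] ι → ℝ := ContinuousLinearMap.pi f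
  have hconv : Convex ℝ (closure (T '' closedBall 0 1)) :=
    ((convex_closedBall 0 1).linear_image T.toLinearMap).closure
  by_contra hnot
  obtain ⟨l, c, hball, hsep⟩ := geometric_hahn_banach_closed_point hconv isClosed_closure hnot
  have hnorm : ‖l.comp T‖ ≤ c :=
    ContinuousLinearMap.norm_le_of_forall_closedBall_apply_lt fun x hx =>
      hball _ (subset_closure ⟨x, hx, rfl⟩)
  have : l (fun i => F (f i)) ≤ c := calc
    l (fun i => F (f i)) = F (l.comp T) := (ContinuousLinearMap.apply_comp_pi f F l).symm
    _ ≤ ‖F‖ * ‖l.comp T‖ := (le_abs_self _).trans (F.le_opNorm _)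
    _ ≤ c := by nlinarith [norm_nonneg F, norm_nonneg (l.comp T)]
  linarith

theorem goldstine {F : StrongDual ℝ (StrongDual ℝ X)} (hF : ‖F‖ ≤ 1) :
    ⇑F ∈ closure ((fun x => ⇑(inclusionInDoubleDual ℝ X x)) '' closedBall (0 : X) 1) := by
  refine mem_closure_iff_nhds.2 fun t ht => ?_
  rw [nhds_pi, Filter.mem_pi] at ht
  obtain ⟨I, hI, s, hs, hsub⟩ := ht
  have := hI.to_subtype
  obtain ⟨_, hv, x, hx, rfl⟩ :=
    mem_closure_iff_nhds.1 (helly_finite (fun φ : I => (φ : StrongDual ℝ X)) hF)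
      (Set.univ.pi fun φ => s φ) (set_pi_mem_nhds Set.finite_univ fun φ _ => hs φ)
  exact ⟨_, hsub fun φ hφ => hv ⟨φ, hφ⟩ trivial, x, hx, rfl⟩

/-- Pointwise convergence on `StrongDual ℝ X → ℝ` is the weak-* topology, so this is the trace on
the closed unit ball of the weak-* neighbourhoods of `F`. -/
noncomputable def weakStarBallFilter (F : StrongDual ℝ (StrongDual ℝ X)) : Filter X :=
  comap (fun x => ⇑(inclusionInDoubleDual ℝ X x)) (𝓝 ⇑F) ⊓ 𝓟 (closedBall 0 1)

theorem tendsto_weakStarBallFilter (F : StrongDual ℝ (StrongDual ℝ X)) (φ : StrongDual ℝ X) :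
    Tendsto φ (weakStarBallFilter F) (𝓝 (F φ)) :=
  ((continuous_apply φ).tendsto _).comp
    ((tendsto_comap (f := fun x => ⇑(inclusionInDoubleDual ℝ X x))).mono_left inf_le_left)

theorem weakStarBallFilter_neBot {F : StrongDual ℝ (StrongDual ℝ X)} (hF : ‖F‖ ≤ 1) :
    (weakStarBallFilter F).NeBot := by
  rw [weakStarBallFilter, neBot_inf_comap_iff_map', map_principal]
  exact mem_closure_iff_nhdsWithin_neBot.1 (goldstine hF)

theorem cauchy_weakStarBallFilter
    (h : ∀ ε > (0 : ℝ), ∃ δ > (0 : ℝ), ∀ x y : X,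
      ‖x‖ ≤ 1 → ‖y‖ ≤ 1 → 2 - δ < ‖x + y‖ → ‖x - y‖ < ε)
    {F : StrongDual ℝ (StrongDual ℝ X)} (hF : ‖F‖ = 1) : Cauchy (weakStarBallFilter F) := by
  refine Metric.cauchy_iff.2 ⟨weakStarBallFilter_neBot hF.le, fun ε hε => ?_⟩
  obtain ⟨δ, hδ, hconv⟩ := h ε hε
  obtain ⟨f, hf, hFf⟩ := ContinuousLinearMap.exists_norm_le_one_lt_apply
    (show 1 - δ / 2 < ‖F‖ by linarith)
  refine ⟨{x | 1 - δ / 2 < f x} ∩ closedBall 0 1,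
    inter_mem ((tendsto_weakStarBallFilter F f).eventually_const_lt hFf)
      (mem_inf_of_right (mem_principal_self _)), ?_⟩
  rintro x ⟨hfx : 1 - δ / 2 < f x, hx⟩ y ⟨hfy : 1 - δ / 2 < f y, hy⟩
  rw [mem_closedBall_zero_iff] at hx hy
  rw [dist_eq_norm]
  refine hconv x y hx hy ?_
  have : f (x + y) ≤ ‖x + y‖ :=
    (le_abs_self _).trans ((f.le_opNorm _).trans (mul_le_of_le_one_left (norm_nonneg _) hf))
  rw [map_add] at this
  linarith

theorem exists_inclusionInDoubleDual_eq_of_norm_eq_one [CompleteSpace X]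
    (h : ∀ ε > (0 : ℝ), ∃ δ > (0 : ℝ), ∀ x y : X,
      ‖x‖ ≤ 1 → ‖y‖ ≤ 1 → 2 - δ < ‖x + y‖ → ‖x - y‖ < ε)
    {F : StrongDual ℝ (StrongDual ℝ X)} (hF : ‖F‖ = 1) :
    ∃ z, inclusionInDoubleDual ℝ X z = F := by
  have := weakStarBallFilter_neBot hF.le
  obtain ⟨z, hz⟩ := CompleteSpace.complete (cauchy_weakStarBallFilter h hF)
  exact ⟨z, ContinuousLinearMap.ext fun φ => tendsto_nhds_unique
    ((φ.continuous.tendsto z).mono_left hz) (tendsto_weakStarBallFilter F φ)⟩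

end

theorem uniformly_convex_reflexive {X : Type*} [NormedAddCommGroup X] [NormedSpace ℝ X]
    [CompleteSpace X]
    (h : ∀ ε > (0 : ℝ), ∃ δ > (0 : ℝ), ∀ x y : X,
      ‖x‖ ≤ 1 → ‖y‖ ≤ 1 → 2 - δ < ‖x + y‖ → ‖x - y‖ < ε) :
    Function.Surjective (NormedSpace.inclusionInDoubleDual ℝ X) := by
  intro F
  rcases eq_or_ne F 0 with rfl | hF
  · exact ⟨0, map_zero _⟩
  have hF' : ‖F‖ ≠ 0 := mt F.opNorm_zero_iff.1 hF
  obtain ⟨z, hz⟩ := exists_inclusionInDoubleDual_eq_of_norm_eq_one h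
    (norm_smul_inv_norm (𝕜 := ℝ) (x := F) hF)
  exact ⟨‖F‖ • z, by rw [map_smul, hz, RCLike.ofReal_real_eq_id, id, smul_inv_smul₀ hF']⟩
end

section
/- Let K be a weak*-compact convex subset of the dual of a real Banach space X, let B be a boundary of K, let (xₙ) be a bounded sequence in X and x ∈ X. If b*(xₙ) → b*(x) for all b* ∈ B, then x*(xₙ) → x*(x) for all x* ∈ K. -/
/-!
Suppose `f ∈ K` and `f (x n - x₀) ≥ ε` along a subsequence. Simons' inequality produces a
`b ∈ B` with `b (x n - x₀) > ε / 2` infinitely often: one takes the closed convex hulls `W n` of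
the tails of the sequence, builds greedily `y = ∑ 2⁻ᵏ⁻¹ z k` with `z k ∈ W k` nearly minimising
the support function `σ` of `K` at each stage, and evaluates a functional `b ∈ B` attaining
`σ y`; convexity of `σ` forces `b` to be large on a point of every `W n`.
Applying this to `x n - x₀` and to `x₀ - x n` gives the theorem.
-/

open Filter Set Finset Topology

theorem Convex.tsum_mem {E : Type*} [AddCommGroup E] [Module ℝ E] [TopologicalSpace E]
    [ContinuousSMul ℝ E] {s : Set E} (hs : Convex ℝ s) (hs' : IsClosed s) {w : ℕ → ℝ}
    {z : ℕ → E} (h₀ : ∀ i, 0 ≤ w i) (h₁ : HasSum w 1) (hwz : Summable fun i => w i • z i)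
    (hz : ∀ i, z i ∈ s) : ∑' i, w i • z i ∈ s := by
  have hpos : ∀ᶠ m in atTop, 0 < ∑ i ∈ range m, w i :=
    h₁.tendsto_sum_nat.eventually_const_lt one_pos
  have hcm : Tendsto (fun m => (∑ i ∈ range m, w i)⁻¹ • ∑ i ∈ range m, w i • z i) atTop
      (𝓝 ((1 : ℝ)⁻¹ • ∑' i, w i • z i)) :=
    (h₁.tendsto_sum_nat.inv₀ one_ne_zero).smul hwz.hasSum.tendsto_sum_nat
  rw [inv_one, one_smul] at hcm
  exact hs'.mem_of_tendsto hcm <| hpos.mono fun m hm =>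
    hs.centerMass_mem (fun i _ => h₀ i) hm fun i _ => hz i

theorem hasSum_inv_two_pow_succ : HasSum (fun i : ℕ => (2⁻¹ : ℝ) ^ (i + 1)) 1 := by
  simpa [pow_succ, div_eq_inv_mul, ← inv_pow, mul_comm] using hasSum_geometric_two' 1

theorem exists_forall_le_add {α : Type*} {s : Set α} {g : α → ℝ} (hs : s.Nonempty)
    (hg : BddBelow (g '' s)) {η : ℝ} (hη : 0 < η) : ∃ z ∈ s, ∀ w ∈ s, g z ≤ g w + η := by
  obtain ⟨_, ⟨z, hz, rfl⟩, hlt⟩ := Real.lt_sInf_add_pos (hs.image g) hη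
  exact ⟨z, hz, fun w hw => by linarith [csInf_le hg ⟨w, hw, rfl⟩]⟩

theorem exists_seq_forall_sum_range {R E : Type*} [Semiring R] [AddCommMonoid E] [Module R E]
    (c : ℕ → R)
    {P : ℕ → E → E → Prop} (h : ∀ n y, ∃ z, P n y z) :
    ∃ z : ℕ → E, ∀ n, P n (∑ k ∈ range n, c k • z k) (z n) := by
  choose zf hzf using h
  let Y : ℕ → E := fun n => Nat.rec 0 (fun m y => y + c m • zf m y) n
  have hY : ∀ n, Y n = ∑ k ∈ range n, c k • zf k (Y k) := by
    intro n
    induction n with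
    | zero => rfl
    | succ n ih => rw [sum_range_succ, ← ih]
  exact ⟨fun n => zf n (Y n), fun n => hY n ▸ hzf n (Y n)⟩

theorem pow_mul_sub_le_sub_of_le_half {s : ℕ → ℝ} {S δ : ℝ} (h₀ : s 0 = 0)
    (h : ∀ n, s (n + 1) ≤ (s n + S + δ * (2⁻¹ ^ n) ^ 2) / 2) (n : ℕ) :
    2⁻¹ ^ n * (S - 2 * δ * (1 - 2⁻¹ ^ n)) ≤ S - s n := by
  induction n with
  | zero => simp [h₀]
  | succ n ih =>
    rw [pow_succ]
    nlinarith [h n]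

theorem exists_tsum_eq_sum_range_add_smul {E : Type*} [NormedAddCommGroup E] [NormedSpace ℝ E]
    [CompleteSpace E] {W : ℕ → Set E} (hW : Antitone W) (hW_closed : ∀ n, IsClosed (W n))
    (hW_convex : ∀ n, Convex ℝ (W n)) {z : ℕ → E} (hz : ∀ k, z k ∈ W k) {M : ℝ}
    (hzM : ∀ k, ‖z k‖ ≤ M) (n : ℕ) : ∃ r ∈ W n, ∑' k, (2⁻¹ : ℝ) ^ (k + 1) • z k =
      ∑ k ∈ range n, (2⁻¹ : ℝ) ^ (k + 1) • z k + (2⁻¹ : ℝ) ^ n • r := by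
  have hsummable : ∀ m : ℕ → ℕ, Summable fun i => (2⁻¹ : ℝ) ^ (i + 1) • z (m i) := fun m =>
    Summable.of_norm_bounded ((summable_geometric_two.mul_left 2⁻¹).mul_right M) fun i => by
      rw [norm_smul, norm_pow, norm_inv, Real.norm_two, pow_succ', one_div]
      gcongr
      exact hzM (m i)
  have hsum : Summable fun k => (2⁻¹ : ℝ) ^ (k + 1) • z k := hsummable id
  refine ⟨∑' i, (2⁻¹ : ℝ) ^ (i + 1) • z (i + n), (hW_convex n).tsum_mem (hW_closed n)
    (fun i => by positivity) hasSum_inv_two_pow_succ (hsummable _)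
    (fun i => hW (Nat.le_add_left n i) (hz _)), ?_⟩
  rw [← hsum.sum_add_tsum_nat_add n, ← (hsummable _).tsum_const_smul]
  refine congrArg (_ + ·) (tsum_congr fun i => ?_)
  rw [smul_smul, ← pow_add, add_right_comm, add_comm n]

section JamesBoundary

variable {X : Type*} [NormedAddCommGroup X] [NormedSpace ℝ X]

def IsJamesBoundary (K B : Set (X →L[ℝ] ℝ)) : Prop :=
  B ⊆ K ∧ ∀ x, ∃ b ∈ B, ∀ y ∈ K, y x ≤ b x

/-- Junk value `0` when `g ↦ g x` is unbounded above on `K`; under a James boundary the supremum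
is attained (`IsJamesBoundary.exists_apply_eq_supportFun`). -/
noncomputable def supportFun (K : Set (X →L[ℝ] ℝ)) (x : X) : ℝ :=
  sSup ((fun g : X →L[ℝ] ℝ => g x) '' K)

namespace IsJamesBoundary

variable {K B : Set (X →L[ℝ] ℝ)}

theorem nonempty (hKB : IsJamesBoundary K B) : K.Nonempty :=
  let ⟨b, hb, _⟩ := hKB.2 0
  ⟨b, hKB.1 hb⟩

theorem le_supportFun (hKB : IsJamesBoundary K B) {g : X →L[ℝ] ℝ} (hg : g ∈ K) (x : X) :
    g x ≤ supportFun K x :=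
  let ⟨b, _, hb⟩ := hKB.2 x
  le_csSup ⟨b x, by rintro _ ⟨y, hy, rfl⟩; exact hb y hy⟩ ⟨g, hg, rfl⟩

theorem supportFun_le (hKB : IsJamesBoundary K B) {x : X} {a : ℝ} (h : ∀ g ∈ K, g x ≤ a) :
    supportFun K x ≤ a :=
  csSup_le (hKB.nonempty.image _) (by rintro _ ⟨g, hg, rfl⟩; exact h g hg)

theorem exists_apply_eq_supportFun (hKB : IsJamesBoundary K B) (x : X) :
    ∃ b ∈ B, b x = supportFun K x :=
  let ⟨b, hbB, hb⟩ := hKB.2 x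
  ⟨b, hbB, le_antisymm (hKB.le_supportFun (hKB.1 hbB) x) (hKB.supportFun_le hb)⟩

theorem supportFun_zero (hKB : IsJamesBoundary K B) : supportFun K (0 : X) = 0 :=
  le_antisymm (hKB.supportFun_le fun g _ => by simp)
    (let ⟨g, hg⟩ := hKB.nonempty; by simpa using hKB.le_supportFun hg 0)

theorem supportFun_add_half_smul_le (hKB : IsJamesBoundary K B) (u v : X) (t : ℝ) :
    supportFun K (u + (2⁻¹ * t) • v) ≤ (supportFun K u + supportFun K (u + t • v)) / 2 :=
  hKB.supportFun_le fun g hg => by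
    have hu := hKB.le_supportFun hg u
    have huv := hKB.le_supportFun hg (u + t • v)
    simp only [map_add, map_smul, smul_eq_mul] at huv ⊢
    linarith

theorem bddBelow_supportFun_add_smul (hKB : IsJamesBoundary K B) {s : Set X} {M : ℝ}
    (hs : ∀ w ∈ s, ‖w‖ ≤ M) (y : X) {t : ℝ} (ht : 0 ≤ t) :
    BddBelow ((fun w => supportFun K (y + t • w)) '' s) := by
  obtain ⟨g, hg⟩ := hKB.nonempty
  refine ⟨g y - t * (‖g‖ * M), ?_⟩
  rintro _ ⟨w, hw, rfl⟩
  have hgw : -(‖g‖ * M) ≤ g w := neg_le_of_abs_le <|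
    (g.le_opNorm w).trans (mul_le_mul_of_nonneg_left (hs w hw) (norm_nonneg g))
  calc g y - t * (‖g‖ * M) ≤ g (y + t • w) := by
        rw [map_add, map_smul, smul_eq_mul]; nlinarith
    _ ≤ _ := hKB.le_supportFun hg _

/-- Simons' inequality for a decreasing sequence of bounded closed convex sets. -/
theorem exists_forall_exists_sub_le_apply [CompleteSpace X] (hKB : IsJamesBoundary K B)
    {W : ℕ → Set X} (hW : Antitone W) (hW_closed : ∀ n, IsClosed (W n))
    (hW_convex : ∀ n, Convex ℝ (W n)) (hW_ne : ∀ n, (W n).Nonempty) {M : ℝ}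
    (hM : ∀ w ∈ W 0, ‖w‖ ≤ M) {a δ : ℝ} (ha : ∀ w ∈ W 0, a ≤ supportFun K w) (hδ : 0 < δ) :
    ∃ b ∈ B, ∀ n, ∃ w ∈ W n, a - δ ≤ b w := by
  have hWM : ∀ n, ∀ w ∈ W n, ‖w‖ ≤ M := fun n w hw => hM w (hW (Nat.zero_le n) hw)
  obtain ⟨z, hz⟩ : ∃ z : ℕ → X, ∀ n, z n ∈ W n ∧ ∀ w ∈ W n,
      supportFun K (∑ k ∈ range n, (2⁻¹ : ℝ) ^ (k + 1) • z k + (2⁻¹ : ℝ) ^ n • z n) ≤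
        supportFun K (∑ k ∈ range n, (2⁻¹ : ℝ) ^ (k + 1) • z k + (2⁻¹ : ℝ) ^ n • w) +
          δ / 2 * ((2⁻¹ : ℝ) ^ n) ^ 2 :=
    exists_seq_forall_sum_range _ fun n y => exists_forall_le_add (hW_ne n)
      (hKB.bddBelow_supportFun_add_smul (hWM n) y (by positivity)) (by positivity)
  choose r hr hsplit using exists_tsum_eq_sum_range_add_smul hW hW_closed hW_convex
    (fun k => (hz k).1) (fun k => hWM k _ (hz k).1)
  set Y : ℕ → X := fun n => ∑ k ∈ range n, (2⁻¹ : ℝ) ^ (k + 1) • z k with hY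
  set y : X := ∑' k, (2⁻¹ : ℝ) ^ (k + 1) • z k
  have hyW : y ∈ W 0 := by
    rw [hsplit 0]
    simpa [hY] using hr 0
  have hrec : ∀ n, supportFun K (Y (n + 1)) ≤
      (supportFun K (Y n) + supportFun K y + δ / 2 * ((2⁻¹ : ℝ) ^ n) ^ 2) / 2 := by
    intro n
    have hmid : Y (n + 1) = Y n + (2⁻¹ * (2⁻¹ : ℝ) ^ n) • z n := by
      simp only [hY, sum_range_succ, pow_succ']
    have hopt : supportFun K (Y n + (2⁻¹ : ℝ) ^ n • z n) ≤
        supportFun K y + δ / 2 * ((2⁻¹ : ℝ) ^ n) ^ 2 := by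
      have := (hz n).2 (r n) (hr n)
      rwa [← hsplit n] at this
    rw [hmid]
    linarith [hKB.supportFun_add_half_smul_le (Y n) (z n) ((2⁻¹ : ℝ) ^ n)]
  have hlow := pow_mul_sub_le_sub_of_le_half (s := fun n => supportFun K (Y n))
    (by simpa [hY] using hKB.supportFun_zero) hrec
  obtain ⟨b, hbB, hb⟩ := hKB.exists_apply_eq_supportFun y
  refine ⟨b, hbB, fun n => ⟨r n, hr n, ?_⟩⟩
  have hby : b y = b (Y n) + (2⁻¹ : ℝ) ^ n * b (r n) := by
    rw [hsplit n, map_add, map_smul, smul_eq_mul]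
  have hbY := hKB.le_supportFun (hKB.1 hbB) (Y n)
  have hp : (0 : ℝ) < 2⁻¹ ^ n := by positivity
  refine le_of_mul_le_mul_left ?_ hp
  nlinarith [hlow n, mul_le_mul_of_nonneg_left (ha y hyW) hp.le, mul_pos (mul_pos hp hp) hδ]

theorem exists_frequently_lt_apply_of_forall_le [CompleteSpace X] (hKB : IsJamesBoundary K B)
    {f : X →L[ℝ] ℝ} (hf : f ∈ K) {e : ℕ → X} {M : ℝ} (he : ∀ k, ‖e k‖ ≤ M) {ε c : ℝ}
    (hfe : ∀ k, ε ≤ f (e k)) (hc : c < ε) : ∃ b ∈ B, ∃ᶠ k in atTop, c < b (e k) := by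
  set W : ℕ → Set X := fun n => closedConvexHull ℝ (e '' Ici n)
  have hW_sub : ∀ n {C : Set X}, Convex ℝ C → IsClosed C → (∀ k, n ≤ k → e k ∈ C) → W n ⊆ C :=
    fun n C hC hC' h => closedConvexHull_min (by rintro _ ⟨k, hk, rfl⟩; exact h k hk) hC hC'
  have hW_ball : ∀ w ∈ W 0, ‖w‖ ≤ M := fun w hw => mem_closedBall_zero_iff.1 <|
    hW_sub 0 (convex_closedBall 0 M) Metric.isClosed_closedBall
      (fun k _ => mem_closedBall_zero_iff.2 (he k)) hw
  have hW_f : ∀ w ∈ W 0, ε ≤ supportFun K w := fun w hw =>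
    (hW_sub 0 (convex_halfSpace_ge (f : X →ₗ[ℝ] ℝ).isLinear ε)
      (isClosed_le continuous_const f.continuous) (fun k _ => hfe k) hw).trans
      (hKB.le_supportFun hf w)
  obtain ⟨b, hbB, hb⟩ := hKB.exists_forall_exists_sub_le_apply (W := W)
    (fun m n h => (closedConvexHull ℝ).monotone (image_mono (Set.Ici_subset_Ici.2 h)))
    (fun _ => isClosed_closedConvexHull) (fun _ => convex_closedConvexHull)
    (fun n => ⟨e n, subset_closedConvexHull ⟨n, Set.self_mem_Ici, rfl⟩⟩) hW_ball hW_f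
    (half_pos (sub_pos.2 hc))
  refine ⟨b, hbB, fun hev => ?_⟩
  obtain ⟨N, hN⟩ := eventually_atTop.1 hev
  obtain ⟨w, hw, hbw⟩ := hb N
  have hbw' : b w ≤ c := hW_sub N (convex_halfSpace_le (b : X →ₗ[ℝ] ℝ).isLinear c)
    (isClosed_le b.continuous continuous_const) (fun k hk => not_lt.1 (hN k hk)) hw
  linarith

theorem exists_frequently_lt_apply [CompleteSpace X] (hKB : IsJamesBoundary K B)
    {f : X →L[ℝ] ℝ} (hf : f ∈ K) {e : ℕ → X} {M : ℝ} (he : ∀ k, ‖e k‖ ≤ M) {ε c : ℝ}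
    (hfe : ∃ᶠ k in atTop, ε ≤ f (e k)) (hc : c < ε) : ∃ b ∈ B, ∃ᶠ k in atTop, c < b (e k) := by
  obtain ⟨φ, hφ, hφe⟩ := extraction_of_frequently_atTop hfe
  obtain ⟨b, hbB, hb⟩ :=
    hKB.exists_frequently_lt_apply_of_forall_le hf (fun k => he (φ k)) hφe hc
  exact ⟨b, hbB, hφ.tendsto_atTop.frequently hb⟩

theorem eventually_apply_lt [CompleteSpace X] (hKB : IsJamesBoundary K B) {e : ℕ → X} {M : ℝ}
    (he : ∀ k, ‖e k‖ ≤ M) (h0 : ∀ b ∈ B, Tendsto (fun k => b (e k)) atTop (𝓝 0))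
    {f : X →L[ℝ] ℝ} (hf : f ∈ K) {ε : ℝ} (hε : 0 < ε) : ∀ᶠ k in atTop, f (e k) < ε := by
  by_contra h
  simp only [not_eventually, not_lt] at h
  obtain ⟨b, hbB, hb⟩ := hKB.exists_frequently_lt_apply hf he h (half_lt_self hε)
  obtain ⟨k, hk, hk'⟩ :=
    (hb.and_eventually ((h0 b hbB).eventually (gt_mem_nhds (half_pos hε)))).exists
  linarith

theorem tendsto_apply_zero [CompleteSpace X] (hKB : IsJamesBoundary K B) {e : ℕ → X} {M : ℝ}
    (he : ∀ k, ‖e k‖ ≤ M) (h0 : ∀ b ∈ B, Tendsto (fun k => b (e k)) atTop (𝓝 0))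
    {f : X →L[ℝ] ℝ} (hf : f ∈ K) : Tendsto (fun k => f (e k)) atTop (𝓝 0) := by
  have hneg : ∀ b ∈ B, Tendsto (fun k => b (-e k)) atTop (𝓝 0) := fun b hb => by
    simpa using (h0 b hb).neg
  refine tendsto_order.2 ⟨fun a ha => ?_, fun a ha => hKB.eventually_apply_lt he h0 hf ha⟩
  filter_upwards [hKB.eventually_apply_lt (fun k => (norm_neg (e k)).trans_le (he k)) hneg hf
    (neg_pos.2 ha)] with k hk
  rw [map_neg] at hk
  linarith

end IsJamesBoundary

end JamesBoundary

theorem rainwater_simons_general {X : Type*} [NormedAddCommGroup X] [NormedSpace ℝ X] [CompleteSpace X]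
    (K : Set (X →L[ℝ] ℝ))
    (B : Set (X →L[ℝ] ℝ)) (hB : B ⊆ K)
    (hbdry : ∀ x : X, ∃ b ∈ B, ∀ y ∈ K, y x ≤ b x)
    (x : ℕ → X) (hbdd : ∃ M : ℝ, ∀ n, ‖x n‖ ≤ M) (x₀ : X)
    (hconv : ∀ b ∈ B, Filter.Tendsto (fun n => b (x n)) Filter.atTop (nhds (b x₀))) :
    ∀ f ∈ K, Filter.Tendsto (fun n => f (x n)) Filter.atTop (nhds (f x₀)) := by
  intro f hf
  obtain ⟨M, hM⟩ := hbdd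
  have hKB : IsJamesBoundary K B := ⟨hB, hbdry⟩
  have h := hKB.tendsto_apply_zero (e := fun n => x n - x₀) (M := M + ‖x₀‖)
    (fun n => (norm_sub_le _ _).trans (by linarith [hM n]))
    (fun b hb => by simpa using (hconv b hb).sub_const (b x₀)) hf
  simpa using h.add_const (f x₀)

theorem rainwater_simons {X : Type*} [NormedAddCommGroup X] [NormedSpace ℝ X] [CompleteSpace X]
    (K : Set (X →L[ℝ] ℝ)) (hKconv : Convex ℝ K)
    (hKcpt : IsCompact (K : Set (WeakDual ℝ X)))
    (B : Set (X →L[ℝ] ℝ)) (hB : B ⊆ K)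
    (hbdry : ∀ x : X, ∃ b ∈ B, ∀ y ∈ K, y x ≤ b x)
    (x : ℕ → X) (hbdd : ∃ M : ℝ, ∀ n, ‖x n‖ ≤ M) (x₀ : X)
    (hconv : ∀ b ∈ B, Filter.Tendsto (fun n => b (x n)) Filter.atTop (nhds (b x₀))) :
    ∀ f ∈ K, Filter.Tendsto (fun n => f (x n)) Filter.atTop (nhds (f x₀)) :=
  rainwater_simons_general K B hB hbdry x hbdd x₀ hconv
end

section
/- Let φ : U → ℝ be a continuous convex function on a nonempty open convex subset U of a real normed linear space X. Then for every x₀ ∈ U, the subdifferential ∂φ(x₀) is nonempty. -/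
/-!
The strict epigraph of `φ` over `U` is open (by continuity) and convex, and misses the point
`(x₀, φ x₀)`, so Hahn–Banach yields a continuous functional `f` on `X × ℝ` with
`f (y, t) < f (x₀, φ x₀)` whenever `y ∈ U` and `φ y < t`. Since the epigraph is unbounded upwards,
`f (0, 1) < 0`, and the horizontal part of `f` rescaled by `-1 / f (0, 1)` is a subgradient at `x₀`.
-/

theorem ContinuousOn.isOpen_strict_epigraph {α β : Type*} [TopologicalSpace α]
    [TopologicalSpace β] [LinearOrder β] [OrderClosedTopology β] {s : Set α} {φ : α → β}
    (hs : IsOpen s) (hφ : ContinuousOn φ s) :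
    IsOpen {p : α × β | p.1 ∈ s ∧ φ p.1 < p.2} := by
  have hfst : ContinuousOn (fun p : α × β => (φ p.1, p.2)) (Prod.fst ⁻¹' s) :=
    (hφ.comp continuousOn_fst fun _ hp => hp).prodMk continuousOn_snd
  exact hfst.isOpen_inter_preimage (hs.preimage continuous_fst)
    (isOpen_lt continuous_fst continuous_snd)

section Subgradient

variable {E : Type*} [TopologicalSpace E] [AddCommGroup E] [Module ℝ E]

theorem exists_subgradient_of_strict_epigraph_separation {s : Set E} {φ : E → ℝ} {x₀ : E}
    (hx₀ : x₀ ∈ s) (f : (E × ℝ) →L[ℝ] ℝ)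
    (hf : ∀ y ∈ s, ∀ t, φ y < t → f (y, t) < f (x₀, φ x₀)) :
    ∃ g : E →L[ℝ] ℝ, ∀ y ∈ s, g y - g x₀ ≤ φ y - φ x₀ := by
  set c := f (0, 1)
  have hsplit (y : E) (t : ℝ) : f (y, t) = f (y, 0) + t * c := by
    have : ((y, t) : E × ℝ) = (y, 0) + t • (0, 1) := by simp
    rw [this, map_add, map_smul, smul_eq_mul]
  have hc : c < 0 := by
    have := hf x₀ hx₀ (φ x₀ + 1) (by linarith)
    rw [hsplit x₀ (φ x₀ + 1), hsplit x₀ (φ x₀)] at this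
    linarith
  set g : E →L[ℝ] ℝ := (-c)⁻¹ • f.comp (ContinuousLinearMap.inl ℝ E ℝ)
  have hg (y : E) : g y = f (y, 0) / (-c) := by
    simp [g, div_eq_inv_mul]
  refine ⟨g, fun y hy => ?_⟩
  suffices ∀ t, φ y < t → g y - g x₀ + φ x₀ < t by linarith [le_of_forall_gt this]
  intro t ht
  have hlt := hf y hy t ht
  rw [hsplit y t, hsplit x₀ (φ x₀)] at hlt
  rw [hg, hg, div_sub_div_same, div_add' _ _ _ (by linarith), div_lt_iff₀ (by linarith)]
  linarith

variable [IsTopologicalAddGroup E] [ContinuousSMul ℝ E]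

theorem ConvexOn.exists_subgradient {s : Set E} {φ : E → ℝ} (hφ : ConvexOn ℝ s φ)
    (hs : IsOpen s) (hcont : ContinuousOn φ s) {x₀ : E} (hx₀ : x₀ ∈ s) :
    ∃ g : E →L[ℝ] ℝ, ∀ y ∈ s, g y - g x₀ ≤ φ y - φ x₀ := by
  have hx₀S : (x₀, φ x₀) ∉ {p : E × ℝ | p.1 ∈ s ∧ φ p.1 < p.2} := fun h => lt_irrefl _ h.2
  obtain ⟨f, hf⟩ := geometric_hahn_banach_open_point hφ.convex_strict_epigraph
    (hcont.isOpen_strict_epigraph hs) hx₀S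
  exact exists_subgradient_of_strict_epigraph_separation hx₀ f fun y hy t ht => hf (y, t) ⟨hy, ht⟩

end Subgradient

theorem subdifferential_nonempty_general {X : Type*} [NormedAddCommGroup X] [NormedSpace ℝ X]
    (U : Set X) (hU : IsOpen U)
    (φ : X → ℝ) (hconv : ConvexOn ℝ U φ) (hcont : ContinuousOn φ U)
    (x₀ : X) (hx₀ : x₀ ∈ U) :
    ∃ f : X →L[ℝ] ℝ, ∀ y ∈ U, f y - f x₀ ≤ φ y - φ x₀ :=
  hconv.exists_subgradient hU hcont hx₀

theorem subdifferential_nonempty {X : Type*} [NormedAddCommGroup X] [NormedSpace ℝ X]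
    (U : Set X) (hne : U.Nonempty) (hU : IsOpen U) (hUconv : Convex ℝ U)
    (φ : X → ℝ) (hconv : ConvexOn ℝ U φ) (hcont : ContinuousOn φ U)
    (x₀ : X) (hx₀ : x₀ ∈ U) :
    ∃ f : X →L[ℝ] ℝ, ∀ y ∈ U, f y - f x₀ ≤ φ y - φ x₀ :=
  subdifferential_nonempty_general U hU φ hconv hcont x₀ hx₀
end

section
/- Let X be a nontrivial real normed linear space, let x₀ ∈ X with ‖x₀‖ = 2, let x* in the unit sphere of X* satisfy x*(x₀) = 2, and let B := co(B_X ∪ {x₀, -x₀}). Then every y* ∈ X* with ‖y* - x*‖ < 1/3 attains its maximum over B at x₀, i.e., y*(b) ≤ y*(x₀) for all b ∈ B. -/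
/-!
A functional `g` with `‖g‖ ≤ g x₀` is at most `g x₀` on the unit ball and at `±x₀`, hence on their
convex hull. For `‖g - f‖ < 1/3` this holds because `‖g‖ < ‖f‖ + 1/3 = 4/3` while
`g x₀ > f x₀ - ‖x₀‖/3 = 4/3`.
-/

open Metric

theorem ContinuousLinearMap.le_apply_of_mem_convexHull_closedBall_union
    {X : Type*} [SeminormedAddCommGroup X] [NormedSpace ℝ X]
    (g : X →L[ℝ] ℝ) (x₀ : X) (hg : ‖g‖ ≤ g x₀) :
    ∀ b ∈ convexHull ℝ (closedBall (0 : X) 1 ∪ {x₀, -x₀}), g b ≤ g x₀ := by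
  have hgenerators : ∀ s ∈ closedBall (0 : X) 1 ∪ {x₀, -x₀}, g s ≤ g x₀ := by
    rintro s (hs | rfl | rfl)
    · calc g s ≤ ‖g‖ * ‖s‖ := (le_abs_self _).trans (g.le_opNorm s)
        _ ≤ ‖g‖ := mul_le_of_le_one_right (norm_nonneg g) (mem_closedBall_zero_iff.mp hs)
        _ ≤ g x₀ := hg
    · exact le_rfl
    · linarith [map_neg g x₀, (norm_nonneg g).trans hg]
  exact fun b hb => convexHull_min hgenerators (convex_halfSpace_le g.toLinearMap.isLinear _) hb

theorem attains_max_on_renormed_ball_general {X : Type*} [NormedAddCommGroup X] [NormedSpace ℝ X]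
    (x₀ : X) (hx₀ : ‖x₀‖ = 2)
    (f : X →L[ℝ] ℝ) (hf : ‖f‖ = 1) (hfx₀ : f x₀ = 2)
    (g : X →L[ℝ] ℝ) (hg : ‖g - f‖ < 1 / 3) :
    ∀ b ∈ convexHull ℝ (Metric.closedBall (0 : X) 1 ∪ {x₀, -x₀}), g b ≤ g x₀ := by
  apply g.le_apply_of_mem_convexHull_closedBall_union x₀
  have hnorm : ‖g‖ ≤ ‖f‖ + ‖g - f‖ := by
    simpa using norm_add_le f (g - f)
  have hx₀_perturb : |(g - f) x₀| ≤ ‖g - f‖ * ‖x₀‖ := (g - f).le_opNorm x₀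
  rw [hx₀, sub_apply, hfx₀] at hx₀_perturb
  linarith [neg_abs_le (g x₀ - 2)]

theorem attains_max_on_renormed_ball {X : Type*} [NormedAddCommGroup X] [NormedSpace ℝ X]
    [Nontrivial X]
    (x₀ : X) (hx₀ : ‖x₀‖ = 2)
    (f : X →L[ℝ] ℝ) (hf : ‖f‖ = 1) (hfx₀ : f x₀ = 2)
    (g : X →L[ℝ] ℝ) (hg : ‖g - f‖ < 1 / 3) :
    ∀ b ∈ convexHull ℝ (Metric.closedBall (0 : X) 1 ∪ {x₀, -x₀}), g b ≤ g x₀ :=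
  attains_max_on_renormed_ball_general x₀ hx₀ f hf hfx₀ g hg
end
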